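/- Let A, B ∈ M_n(ℂ) and define A₂(t) := exp(−itA/2) · ( (1/2)(exp(−itB) A exp(itB) − A) + exp(−itB)(exp(−itA/2) B exp(itA/2) − B) exp(itB) ) · exp(itA/2). There exists a constant C ≥ 0 such that for all t ∈ [0,1], ‖ A₂(t) + (t²/8)( [A,[A,B]] + 2[B,[A,B]] ) ‖ ≤ C t³. -/

import Mathlib

open scoped Matrix.Norms.L2Operator
open Matrix

/-- The exact error Hamiltonian of the second-order (Strang) splitting. -/
noncomputable def A2 {n : ℕ} (A B : Matrix (Fin n) (Fin n) ℂ) (t : ℝ) :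
    Matrix (Fin n) (Fin n) ℂ :=
  NormedSpace.exp ((-(Complex.I * (t : ℂ) / 2)) • A) *
    ((1 / 2 : ℂ) •
        (NormedSpace.exp ((-(Complex.I * (t : ℂ))) • B) * A *
            NormedSpace.exp ((Complex.I * (t : ℂ)) • B) - A) +
      NormedSpace.exp ((-(Complex.I * (t : ℂ))) • B) *
        (NormedSpace.exp ((-(Complex.I * (t : ℂ) / 2)) • A) * B *
            NormedSpace.exp ((Complex.I * (t : ℂ) / 2) • A) - B) *
        NormedSpace.exp ((Complex.I * (t : ℂ)) • B)) *
    NormedSpace.exp ((Complex.I * (t : ℂ) / 2) • A)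

/-!
Write `X = -(i/2) A` and `Z = -i B`, so that `A₂(t) = e^{tX} G(t) e^{-tX}` with
`G(t) = ½ (e^{tZ} A e^{-tZ} - A) + e^{tZ} (e^{tX} B e^{-tX} - B) e^{-tZ}`.
Expansions `f(s) = c₀ + s c₁ + s² c₂ + O(s³)` at `s = 0` are stable under sums and products, and
conjugation by `e^{sX}` maps the coefficients to `c₀`, `c₁ + [X, c₀]`,
`c₂ + [X, c₁] + ½ [X, [X, c₀]]`. Propagating this through the formula for `A₂`, the linear terms
cancel and the quadratic one is `-(1/8)([A,[A,B]] + 2[B,[A,B]])`. Continuity then turns the bound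
near `0` into a bound on `[0, 1]`.
-/

open Asymptotics Filter Topology NormedSpace

section QuadraticExpansion

variable {𝕂 𝔸 : Type*} [NormedField 𝕂] [NormedRing 𝔸] [NormedAlgebra 𝕂 𝔸]

def HasQuadraticExpansion (f : 𝕂 → 𝔸) (c₀ c₁ c₂ : 𝔸) : Prop :=
  (fun s => f s - (c₀ + s • c₁ + s ^ 2 • c₂)) =O[𝓝 0] fun s => s ^ 3

namespace HasQuadraticExpansion

variable {f g : 𝕂 → 𝔸} {a₀ a₁ a₂ b₀ b₁ b₂ : 𝔸}

theorem const (y : 𝔸) : HasQuadraticExpansion (fun _ : 𝕂 => y) y 0 0 := by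
  simpa [HasQuadraticExpansion] using isBigO_zero _ _

theorem add (hf : HasQuadraticExpansion f a₀ a₁ a₂) (hg : HasQuadraticExpansion g b₀ b₁ b₂) :
    HasQuadraticExpansion (fun s => f s + g s) (a₀ + b₀) (a₁ + b₁) (a₂ + b₂) :=
  (IsBigO.add hf hg).congr_left fun s => by simp only [smul_add]; abel

theorem sub (hf : HasQuadraticExpansion f a₀ a₁ a₂) (hg : HasQuadraticExpansion g b₀ b₁ b₂) :
    HasQuadraticExpansion (fun s => f s - g s) (a₀ - b₀) (a₁ - b₁) (a₂ - b₂) :=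
  (IsBigO.sub hf hg).congr_left fun s => by simp only [smul_sub]; abel

theorem const_smul (c : 𝕂) (hf : HasQuadraticExpansion f a₀ a₁ a₂) :
    HasQuadraticExpansion (fun s => c • f s) (c • a₀) (c • a₁) (c • a₂) :=
  (IsBigO.const_smul_left hf c).congr_left fun s => by
    simp only [Pi.smul_apply, smul_sub, smul_add, smul_comm c]

theorem isBigO_one (hf : HasQuadraticExpansion f a₀ a₁ a₂) :
    f =O[𝓝 0] fun _ => (1 : 𝕂) := by
  have hpoly : (fun s : 𝕂 => a₀ + s • a₁ + s ^ 2 • a₂) =O[𝓝 0] fun _ => (1 : 𝕂) :=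
    Tendsto.isBigO_one 𝕂 (Continuous.tendsto (by fun_prop) 0)
  have hcube : (fun s : 𝕂 => s ^ 3) =O[𝓝 0] fun _ => (1 : 𝕂) :=
    Tendsto.isBigO_one 𝕂 (Continuous.tendsto (by fun_prop) 0)
  exact ((IsBigO.trans hf hcube).add hpoly).congr_left fun s => sub_add_cancel _ _

theorem mul (hf : HasQuadraticExpansion f a₀ a₁ a₂) (hg : HasQuadraticExpansion g b₀ b₁ b₂) :
    HasQuadraticExpansion (fun s => f s * g s)
      (a₀ * b₀) (a₀ * b₁ + a₁ * b₀) (a₀ * b₂ + a₁ * b₁ + a₂ * b₀) := by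
  have hpoly : (fun s : 𝕂 => a₀ + s • a₁ + s ^ 2 • a₂) =O[𝓝 0] fun _ => (1 : 𝕂) :=
    Tendsto.isBigO_one 𝕂 (Continuous.tendsto (by fun_prop) 0)
  have hrest : (fun s : 𝕂 => a₁ * b₂ + a₂ * b₁ + s • (a₂ * b₂)) =O[𝓝 0] fun _ => (1 : 𝕂) :=
    Tendsto.isBigO_one 𝕂 (Continuous.tendsto (by fun_prop) 0)
  have h₁ : (fun s => (f s - (a₀ + s • a₁ + s ^ 2 • a₂)) * g s) =O[𝓝 0] fun s => s ^ 3 := by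
    simpa using IsBigO.mul hf hg.isBigO_one
  have h₂ : (fun s => (a₀ + s • a₁ + s ^ 2 • a₂) * (g s - (b₀ + s • b₁ + s ^ 2 • b₂)))
      =O[𝓝 0] fun s => s ^ 3 := by
    simpa using hpoly.mul hg
  have h₃ : (fun s : 𝕂 => s ^ 3 • (a₁ * b₂ + a₂ * b₁ + s • (a₂ * b₂))) =O[𝓝 0] fun s => s ^ 3 := by
    simpa using (isBigO_refl (fun s : 𝕂 => s ^ 3) _).smul hrest
  -- With `P_f`, `P_g` the truncations, `f g - P_f P_g = (f - P_f) g + P_f (g - P_g)`, and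
  -- `P_f P_g` differs from the claimed truncation by the terms of degree 3 and 4 in `h₃`.
  refine ((h₁.add h₂).add h₃).congr_left fun s => ?_
  simp only [mul_add, add_mul, sub_mul, mul_sub, smul_mul_assoc, mul_smul_comm, smul_smul,
    smul_add]
  module

end HasQuadraticExpansion

end QuadraticExpansion

section Exponential

variable {𝕂 𝔸 : Type*} [RCLike 𝕂] [NormedRing 𝔸] [NormedAlgebra 𝕂 𝔸] [CompleteSpace 𝔸]

theorem hasQuadraticExpansion_exp_smul (X : 𝔸) :
    HasQuadraticExpansion (fun s : 𝕂 => exp (s • X)) 1 X ((2 : 𝕂)⁻¹ • X ^ 2) := by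
  have htaylor := (exp_hasFPowerSeriesAt_zero (𝕂 := 𝕂) (𝔸 := 𝔸)).isBigO_sub_partialSum_pow 3
  have hX : Tendsto (fun s : 𝕂 => s • X) (𝓝 0) (𝓝 0) :=
    (by fun_prop : Continuous fun s : 𝕂 => s • X).tendsto' 0 0 (zero_smul _ _)
  have hnorm : (fun s : 𝕂 => ‖s • X‖ ^ 3) =O[𝓝 0] fun s => s ^ 3 :=
    IsBigO.of_bound (‖X‖ ^ 3) (Eventually.of_forall fun s => by
      simp [norm_smul, mul_pow, mul_comm])
  refine ((htaylor.comp_tendsto hX).trans hnorm).congr_left fun s => ?_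
  simp [FormalMultilinearSeries.partialSum, Finset.sum_range_succ, expSeries_apply_eq, smul_pow,
    smul_smul, mul_comm]

theorem HasQuadraticExpansion.conj_exp {Y : 𝕂 → 𝔸} {y₀ y₁ y₂ : 𝔸}
    (hY : HasQuadraticExpansion Y y₀ y₁ y₂) (X : 𝔸) :
    HasQuadraticExpansion (fun s => exp (s • X) * Y s * exp (-(s • X)))
      y₀ (y₁ + ⁅X, y₀⁆) (y₂ + ⁅X, y₁⁆ + (2 : 𝕂)⁻¹ • ⁅X, ⁅X, y₀⁆⁆) := by
  have h := ((hasQuadraticExpansion_exp_smul X).mul hY).mul (hasQuadraticExpansion_exp_smul (-X))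
  simp only [smul_neg] at h
  convert h using 1
  · simp
  · simp only [Ring.lie_def, one_mul, mul_neg, mul_one]
    noncomm_ring
  · simp only [Ring.lie_def, add_mul, sub_mul, mul_sub, smul_mul_assoc, mul_smul_comm, smul_sub,
      neg_mul, mul_neg, one_mul, mul_one, pow_two, mul_assoc, smul_neg]
    module

variable (𝕂) in
noncomputable def strangError (X Z Y₁ Y₂ : 𝔸) (s : 𝕂) : 𝔸 :=
  exp (s • X) *
    ((2 : 𝕂)⁻¹ • (exp (s • Z) * Y₁ * exp (-(s • Z)) - Y₁) +
      exp (s • Z) * (exp (s • X) * Y₂ * exp (-(s • X)) - Y₂) * exp (-(s • Z))) *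
    exp (-(s • X))

theorem continuous_strangError (X Z Y₁ Y₂ : 𝔸) : Continuous (strangError 𝕂 X Z Y₁ Y₂) := by
  have hexp (W : 𝔸) : Continuous fun s : 𝕂 => exp (s • W) :=
    (differentiable_exp_smul_const 𝕂 W).continuous
  have hexp' (W : 𝔸) : Continuous fun s : 𝕂 => exp (-(s • W)) :=
    (hexp (-W)).congr fun s => by rw [smul_neg]
  unfold strangError
  fun_prop

theorem hasQuadraticExpansion_strangError (X Z Y₁ Y₂ : 𝔸) :
    HasQuadraticExpansion (strangError 𝕂 X Z Y₁ Y₂)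
      0 ((2 : 𝕂)⁻¹ • ⁅Z, Y₁⁆ + ⁅X, Y₂⁆)
      ((4 : 𝕂)⁻¹ • ⁅Z, ⁅Z, Y₁⁆⁆ + (2 : 𝕂)⁻¹ • ⁅X, ⁅X, Y₂⁆⁆ + ⁅Z, ⁅X, Y₂⁆⁆ +
        ⁅X, (2 : 𝕂)⁻¹ • ⁅Z, Y₁⁆ + ⁅X, Y₂⁆⁆) := by
  have hY₁ := ((HasQuadraticExpansion.const (𝕂 := 𝕂) Y₁).conj_exp Z).sub (.const Y₁)
  have hY₂ := ((HasQuadraticExpansion.const (𝕂 := 𝕂) Y₂).conj_exp X).sub (.const Y₂)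
  unfold strangError
  convert ((hY₁.const_smul (2 : 𝕂)⁻¹).add (hY₂.conj_exp Z)).conj_exp X using 1
  all_goals simp only [sub_self, Ring.lie_def, mul_zero, zero_mul, sub_zero, zero_add, add_zero,
    smul_zero, smul_smul] <;> norm_num <;> abel

end Exponential

section Strang

open Complex

variable {𝔸 : Type*} [Ring 𝔸] [Algebra ℂ 𝔸]

theorem strangError_linearCoeff_eq_zero (A B : 𝔸) :
    (2 : ℂ)⁻¹ • ⁅-I • B, A⁆ + ⁅-(I / 2) • A, B⁆ = 0 := by
  simp only [Ring.lie_def, smul_mul_assoc, mul_smul_comm, smul_sub]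
  module

theorem strangError_quadraticCoeff_eq (A B : 𝔸) :
    (4 : ℂ)⁻¹ • ⁅-I • B, ⁅-I • B, A⁆⁆ + (2 : ℂ)⁻¹ • ⁅-(I / 2) • A, ⁅-(I / 2) • A, B⁆⁆ +
        ⁅-I • B, ⁅-(I / 2) • A, B⁆⁆ + ⁅-(I / 2) • A, (2 : ℂ)⁻¹ • ⁅-I • B, A⁆ + ⁅-(I / 2) • A, B⁆⁆ =
      -(8 : ℂ)⁻¹ • (⁅A, ⁅A, B⁆⁆ + 2 • ⁅B, ⁅A, B⁆⁆) := by
  linear_combination (norm := skip)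
    I_sq • ((4 : ℂ)⁻¹ • ⁅B, ⁅B, A⁆⁆ + (8 : ℂ)⁻¹ • ⁅A, ⁅A, B⁆⁆ + (2 : ℂ)⁻¹ • ⁅B, ⁅A, B⁆⁆)
  simp only [Ring.lie_def, smul_mul_assoc, mul_smul_comm, smul_sub, mul_sub, sub_mul, mul_add,
    add_mul, smul_smul, smul_add, mul_assoc]
  module

end Strang

theorem IsCompact.exists_bound_of_isBigO_pow {E F : Type*} [SeminormedAddCommGroup E]
    [SeminormedAddGroup F] {K : Set E} (hK : IsCompact K) {f : E → F} (hf : ContinuousOn f K)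
    {k : ℕ} (h₀ : f =O[𝓝 0] fun x => ‖x‖ ^ k) : ∃ C, 0 ≤ C ∧ ∀ x ∈ K, ‖f x‖ ≤ C * ‖x‖ ^ k := by
  obtain ⟨C₀, hC₀⟩ := h₀.bound
  obtain ⟨ε, hε, hnear⟩ := Metric.eventually_nhds_iff_ball.1 hC₀
  obtain ⟨M, hM⟩ := (hK.diff Metric.isOpen_ball).exists_bound_of_continuousOn
    (hf.mono Set.sdiff_subset)
  refine ⟨max (max C₀ (M / ε ^ k)) 0, le_max_right _ _, fun x hx => ?_⟩
  by_cases hxε : x ∈ Metric.ball (0 : E) ε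
  · calc ‖f x‖ ≤ C₀ * ‖‖x‖ ^ k‖ := hnear x hxε
      _ ≤ _ := by
        rw [norm_pow, norm_norm]
        gcongr
        exact (le_max_left _ _).trans (le_max_left _ _)
  · have hεx : ε ≤ ‖x‖ := by simpa using hxε
    have hfx := hM x ⟨hx, hxε⟩
    calc ‖f x‖ ≤ M / ε ^ k * ε ^ k := by
          rw [div_mul_cancel₀ _ (pow_pos hε k).ne']; exact hfx
      _ ≤ _ := by
        gcongr
        exact (le_max_right _ _).trans (le_max_left _ _)

section A2

open Complex

variable {n : ℕ}

theorem A2_eq_strangError (A B : Matrix (Fin n) (Fin n) ℂ) (t : ℝ) :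
    A2 A B t = strangError ℂ (-(I / 2) • A) (-I • B) A B t := by
  have hA (s : ℂ) : s • (-(I / 2) • A) = (-(I * s / 2)) • A := by rw [smul_smul]; ring_nf
  have hB (s : ℂ) : s • (-I • B) = (-(I * s)) • B := by rw [smul_smul]; ring_nf
  have hA' (s : ℂ) : -(s • (-(I / 2) • A)) = (I * s / 2) • A := by rw [hA, ← neg_smul]; ring_nf
  have hB' (s : ℂ) : -(s • (-I • B)) = (I * s) • B := by rw [hB, ← neg_smul]; ring_nf
  simp only [A2, strangError]
  rw [hA', hB', hA, hB, one_div]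

theorem continuous_A2 (A B : Matrix (Fin n) (Fin n) ℂ) : Continuous (A2 A B) := by
  rw [funext (A2_eq_strangError A B)]
  exact (continuous_strangError _ _ A B).comp continuous_ofReal

theorem isBigO_A2_add_commutators (A B : Matrix (Fin n) (Fin n) ℂ) :
    (fun t : ℝ => A2 A B t + ((t : ℂ) ^ 2 / 8) • (⁅A, ⁅A, B⁆⁆ + 2 • ⁅B, ⁅A, B⁆⁆))
      =O[𝓝 0] fun t => ‖t‖ ^ 3 := by
  have h := hasQuadraticExpansion_strangError (𝕂 := ℂ) (-(I / 2) • A) (-I • B) A B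
  rw [strangError_quadraticCoeff_eq, strangError_linearCoeff_eq_zero] at h
  have hR := h.comp_tendsto (continuous_ofReal.tendsto' 0 0 ofReal_zero)
  refine (hR.trans (isBigO_of_le _ fun t => by simp)).congr_left fun t => ?_
  simp only [Function.comp_apply, A2_eq_strangError, smul_zero, add_zero, zero_add, smul_smul]
  module

end A2

/-- the leading term of `A₂(t)` is `-(t²/8)([A,[A,B]] + 2[B,[A,B]])`. -/
theorem stmt9 {n : ℕ} (A B : Matrix (Fin n) (Fin n) ℂ) :
    ∃ C : ℝ, 0 ≤ C ∧ ∀ t ∈ Set.Icc (0:ℝ) 1,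
      ‖A2 A B t +
          (((t : ℂ) ^ 2) / 8) •
            ((A * (A * B - B * A) - (A * B - B * A) * A) +
              2 • (B * (A * B - B * A) - (A * B - B * A) * B))‖
        ≤ C * t ^ 3 := by
  obtain ⟨C, hC₀, hC⟩ := isCompact_Icc.exists_bound_of_isBigO_pow
    ((continuous_A2 A B).add (by fun_prop)).continuousOn (isBigO_A2_add_commutators A B)
  refine ⟨C, hC₀, fun t ht => ?_⟩
  simpa [Ring.lie_def, abs_of_nonneg ht.1] using hC t ht
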